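/- arXiv:1402.2704 — 4 statements merged into one kernel-verified Lean document; each statement's English description precedes it below -/
import Mathlib

section
/- For the rejection-sampling genetic algorithm, with transition kernel P(G → G') ∝ p_B(g_i' | G_{-i}) f(g_i') when G' differs from G only in coordinate i (index i chosen uniformly), the distribution π(G) ∝ p_B(G) ∏_{j=1}^N f(g_j) satisfies detailed balance: π(G)P(G→G') = π(G')P(G'→G). -/
/-- Detailed balance for the rejection-sampling genetic algorithm.
Populations are `G : Fin N → Γ`; a transition replaces a uniformly chosen
coordinate `i` by a sample from the distribution proportional to
`p_B(· | G_{-i}) * f(·)`.  The distribution `π(G) ∝ p_B(G) ∏ j, f (G j)`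
satisfies detailed balance. -/
theorem rejection_sampling_detailed_balance
    {Γ : Type*} [Fintype Γ] [DecidableEq Γ] {N : ℕ} (hN : 0 < N)
    (pB : (Fin N → Γ) → ℝ)
    (hpBpos : ∀ G, 0 < pB G)
    (hpBsum : ∑ G, pB G = 1)
    (hexch : ∀ (σ : Equiv.Perm (Fin N)) (G : Fin N → Γ), pB (G ∘ σ) = pB G)
    (f : Γ → ℝ) (hfpos : ∀ g, 0 < f g) (hfle : ∀ g, f g ≤ 1)
    -- conditional probability of the i-th coordinate given the others
    (pcond : Fin N → (Fin N → Γ) → Γ → ℝ)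
    (hpcond : ∀ i G g, pcond i G g =
      pB (Function.update G i g) / ∑ g' : Γ, pB (Function.update G i g'))
    -- the stationary candidate, normalised
    (π : (Fin N → Γ) → ℝ)
    (hπ : ∀ G, π G = (pB G * ∏ j, f (G j)) / ∑ H : Fin N → Γ, pB H * ∏ j, f (H j))
    -- the transition kernel: choose i uniformly, sample proportional to pcond * f
    (K : (Fin N → Γ) → (Fin N → Γ) → ℝ)
    (hK : ∀ (G : Fin N → Γ) (i : Fin N) (g' : Γ), g' ≠ G i →
      K G (Function.update G i g') =
      (1 / N) * (pcond i G g' * f g' / ∑ g'' : Γ, pcond i G g'' * f g'')) :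
    ∀ (G : Fin N → Γ) (i : Fin N) (g' : Γ), g' ≠ G i →
      π G * K G (Function.update G i g') =
      π (Function.update G i g') * K (Function.update G i g') G := by
  intro G i g' hne
  haveI : Nonempty Γ := ⟨g'⟩
  haveI : Nonempty (Fin N → Γ) := ⟨fun _ => g'⟩
  set G' := Function.update G i g' with hG'
  have hidem : ∀ g : Γ, Function.update G' i g = Function.update G i g := by
    intro g; rw [hG', Function.update_idem]
  have hGback : Function.update G' i (G i) = G := by
    rw [hidem, Function.update_eq_self]
  have hne' : G i ≠ G' i := by
    simp [hG', Function.update_self, hne.symm]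
  -- pcond from G' equals pcond from G
  have hpc : ∀ g, pcond i G' g = pcond i G g := by
    intro g
    rw [hpcond, hpcond]
    simp only [hidem]
  have hKG : K G G' = (1 / N) * (pcond i G g' * f g' / ∑ g'' : Γ, pcond i G g'' * f g'') :=
    hK G i g' hne
  have hKG' : K G' G = (1 / N) * (pcond i G (G i) * f (G i) / ∑ g'' : Γ, pcond i G g'' * f g'') := by
    have := hK G' i (G i) hne'
    rw [hGback] at this
    rw [this]
    simp only [hpc]
  -- key product identity
  have hkey : (∏ j, f (G j)) * f g' = (∏ j, f (G' j)) * f (G i) := by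
    have h1 : ∏ j, f (G' j) = f g' * ∏ j ∈ Finset.univ.erase i, f (G j) := by
      rw [← Finset.mul_prod_erase Finset.univ (fun j => f (G' j)) (Finset.mem_univ i)]
      congr 1
      · simp [hG']
      · exact Finset.prod_congr rfl fun j hj => by
          simp [hG', Function.update_of_ne (Finset.mem_erase.1 hj).1]
    have h2 : ∏ j, f (G j) = f (G i) * ∏ j ∈ Finset.univ.erase i, f (G j) :=
      (Finset.mul_prod_erase Finset.univ (fun j => f (G j)) (Finset.mem_univ i)).symm
    rw [h1, h2]; ring
  rw [hπ G, hπ G', hKG, hKG', hpcond, hpcond]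
  simp only [hidem, hG', Function.update_idem]
  set C := ∑ H : Fin N → Γ, pB H * ∏ j, f (H j)
  set S := ∑ g'' : Γ, pB (Function.update G i g'')
  set Z := ∑ g'' : Γ, pcond i G g'' * f g''
  rw [Function.update_eq_self]
  have hC : C ≠ 0 := by
    have : 0 < C := Finset.sum_pos (fun H _ => mul_pos (hpBpos H)
      (Finset.prod_pos fun j _ => hfpos (H j))) Finset.univ_nonempty
    exact this.ne'
  have hS : S ≠ 0 := by
    have : 0 < S := Finset.sum_pos (fun g _ => hpBpos _) Finset.univ_nonempty
    exact this.ne'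
  have hZ : Z ≠ 0 := by
    have : 0 < Z := Finset.sum_pos (fun g _ => mul_pos (by
      rw [hpcond]
      exact div_pos (hpBpos _) (Finset.sum_pos (fun g _ => hpBpos _) Finset.univ_nonempty))
      (hfpos g)) Finset.univ_nonempty
    exact this.ne'
  have hNne : (N : ℝ) ≠ 0 := Nat.cast_ne_zero.2 hN.ne'
  field_simp
  linear_combination (pB G * pB (Function.update G i g')) * hkey
end

section
/- In the subset-selection algorithm — breed M children sequentially from G via c_{k+1} ~ p_B(· | G, c_1,…,c_k), form U = G ∪ C, propose a size-N subset G' ⊆ U with a symmetric proposal q(G'|G,U) = q(G|G',U), and accept with probability min{1, F(G')/F(G)} — the distribution π(G) ∝ p_B(G) F(G) satisfies detailed balance. -/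
/-- Detailed balance for the subset-selection algorithm.  Populations are
size-`N` multisets over a finite genome set `Γ`.  From `G`, children `C` are
bred with probability `p_B(C | G) = p_B(G ∪ C) / p_B(G)` (exchangeable
breeding), a size-`N` subset `G' ⊆ U = G ∪ C` is proposed with a symmetric
proposal `q`, and accepted with probability `min 1 (F G' / F G)`.  The
distribution `π(G) ∝ p_B(G) F(G)` satisfies detailed balance. -/
theorem subset_selection_detailed_balance
    {Γ : Type*} [Fintype Γ] [DecidableEq Γ] (N : ℕ) (hN : 0 < N)
    (pB : Multiset Γ → ℝ) (hpBpos : ∀ G, 0 < pB G)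
    (F : Multiset Γ → ℝ) (hFpos : ∀ G, 0 < F G)
    -- conditional breeding probability of children C given parents G
    (pBcond : Multiset Γ → Multiset Γ → ℝ)
    (hpBcond : ∀ C G, pBcond C G = pB (G + C) / pB G)
    -- symmetric subset proposal within U
    (q : Multiset Γ → Multiset Γ → Multiset Γ → ℝ)
    (hq : ∀ G G' U, q G' G U = q G G' U)
    -- normalised stationary candidate on size-N populations
    (π : Multiset Γ → ℝ)
    (hπ : ∀ G, π G = pB G * F G / ∑ H : Sym Γ N, pB (H : Multiset Γ) * F (H : Multiset Γ))
    -- transition probability from G to G' via the intermediate population U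
    (T : Multiset Γ → Multiset Γ → Multiset Γ → ℝ)
    (hT : ∀ G G' U, G ≤ U → G' ≤ U →
      T G G' U = pBcond (U - G) G * q G' G U * min 1 (F G' / F G)) :
    ∀ G G' U : Multiset Γ, Multiset.card G = N → Multiset.card G' = N →
      G ≤ U → G' ≤ U →
      π G * T G G' U = π G' * T G' G U := by
  intro G G' U hG hG' hGU hG'U
  rw [hπ, hπ, hT _ _ _ hGU hG'U, hT _ _ _ hG'U hGU, hpBcond, hpBcond,
      add_tsub_cancel_of_le hGU, add_tsub_cancel_of_le hG'U, hq G G' U]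
  have h1 : ∀ a b : ℝ, 0 < a → a * min 1 (b / a) = min a b := by
    intro a b ha
    rw [mul_min_of_nonneg _ _ ha.le, mul_one, mul_div_cancel₀ b ha.ne']
  set Z := ∑ H : Sym Γ N, pB (H : Multiset Γ) * F (H : Multiset Γ) with hZ
  have key : ∀ X Y : Multiset Γ,
      pB X * F X / Z * (pB U / pB X * q G G' U * min 1 (F Y / F X))
        = pB U * q G G' U / Z * min (F X) (F Y) := by
    intro X Y
    have hx := (hpBpos X).ne'
    rw [← h1 (F X) (F Y) (hFpos X)]
    calc pB X * F X / Z * (pB U / pB X * q G G' U * min 1 (F Y / F X))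
        = (pB X / pB X) * (pB U * q G G' U / Z * (F X * min 1 (F Y / F X))) := by
          ring
      _ = pB U * q G G' U / Z * (F X * min 1 (F Y / F X)) := by
          rw [div_self hx, one_mul]
  rw [key G G', key G' G, min_comm]
end

section
/- In the children-only tournament with K children c_1,…,c_K drawn i.i.d. from p_B(· | G_{-i}) and winner chosen with probability proportional to fitness, the distribution of the winner converges, as K → ∞, to the distribution proportional to p_B(· | G_{-i}) f(·); i.e., for each genome g, the probability that the accepted child equals g tends to p_B(g|G_{-i})f(g) / Σ_{g'} p_B(g'|G_{-i})f(g'). -/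
set_option linter.unusedSectionVars false

section Aux
variable {Γ : Type*} [Fintype Γ] [DecidableEq Γ]

lemma pi_sum_prod (q : Γ → ℝ) (hq : ∑ g, q g = 1) (n : ℕ) :
    ∑ c : Fin n → Γ, ∏ k, q (c k) = 1 := by
  rw [← Fintype.piFinset_univ, ← Finset.prod_univ_sum]
  simp [hq]

lemma pi_sum_single (q : Γ → ℝ) (hq : ∑ g, q g = 1) {n : ℕ} (k₀ : Fin n) (h : Γ → ℝ) :
    ∑ c : Fin n → Γ, (∏ k, q (c k)) * h (c k₀) = ∑ g, q g * h g := by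
  have key : ∀ c : Fin n → Γ, (∏ k, q (c k)) * h (c k₀)
      = ∏ k, (q (c k) * if k = k₀ then h (c k) else 1) := by
    intro c
    rw [Finset.prod_mul_distrib, Finset.prod_ite_eq' Finset.univ k₀ (fun k => h (c k))]
    simp
  simp_rw [key]
  rw [← Fintype.piFinset_univ,
      ← Finset.prod_univ_sum (fun _ => (Finset.univ : Finset Γ))
        (fun k g => q g * if k = k₀ then h g else 1)]
  have h2 : ∀ k : Fin n, (∑ g, q g * if k = k₀ then h g else 1)
      = if k = k₀ then ∑ g, q g * h g else 1 := by
    intro k; by_cases hk : k = k₀ <;> simp [hk, hq]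
  simp_rw [h2, Finset.prod_ite_eq' Finset.univ k₀ (fun _ => ∑ g, q g * h g)]
  simp

lemma pi_sum_pair (q : Γ → ℝ) (hq : ∑ g, q g = 1) {n : ℕ} {k₀ k₁ : Fin n} (hkl : k₀ ≠ k₁)
    (h h' : Γ → ℝ) :
    ∑ c : Fin n → Γ, (∏ k, q (c k)) * (h (c k₀) * h' (c k₁))
      = (∑ g, q g * h g) * (∑ g, q g * h' g) := by
  have key : ∀ c : Fin n → Γ, (∏ k, q (c k)) * (h (c k₀) * h' (c k₁))
      = ∏ k, (q (c k) * ((if k = k₀ then h (c k) else 1) * (if k = k₁ then h' (c k) else 1))) := by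
    intro c
    simp_rw [Finset.prod_mul_distrib]
    rw [Finset.prod_ite_eq' Finset.univ k₀ (fun k => h (c k)),
        Finset.prod_ite_eq' Finset.univ k₁ (fun k => h' (c k))]
    simp
  simp_rw [key]
  rw [← Fintype.piFinset_univ,
      ← Finset.prod_univ_sum (fun _ => (Finset.univ : Finset Γ))
        (fun k g => q g * ((if k = k₀ then h g else 1) * (if k = k₁ then h' g else 1)))]
  have h2 : ∀ k : Fin n, (∑ g, q g * ((if k = k₀ then h g else 1) * (if k = k₁ then h' g else 1)))
      = (if k = k₀ then ∑ g, q g * h g else 1) * (if k = k₁ then ∑ g, q g * h' g else 1) := by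
    intro k
    by_cases h0 : k = k₀ <;> by_cases h1 : k = k₁
    · exact absurd (h0 ▸ h1) hkl
    · simp [h0, h1, hq, hkl, Ne.symm hkl]
    · simp [h0, h1, hq, hkl, Ne.symm hkl]
    · simp [h0, h1, hq, hkl, Ne.symm hkl]
  simp_rw [h2]
  rw [Finset.prod_mul_distrib, Finset.prod_ite_eq' Finset.univ k₀,
      Finset.prod_ite_eq' Finset.univ k₁]
  simp

lemma pi_sum_S (q : Γ → ℝ) (hq : ∑ g, q g = 1) (f : Γ → ℝ) (n : ℕ) :
    ∑ c : Fin n → Γ, (∏ k, q (c k)) * (∑ k, f (c k)) = n * (∑ g, q g * f g) := by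
  have : ∀ c : Fin n → Γ, (∏ k, q (c k)) * (∑ k, f (c k))
      = ∑ k : Fin n, (∏ j, q (c j)) * f (c k) := by
    intro c; rw [Finset.mul_sum]
  simp_rw [this]
  rw [Finset.sum_comm]
  simp_rw [pi_sum_single q hq _ f]
  simp [mul_comm]

lemma pi_sum_sq (q : Γ → ℝ) (hq : ∑ g, q g = 1) (f : Γ → ℝ) (n : ℕ) :
    ∑ c : Fin n → Γ, (∏ k, q (c k)) * (∑ k, f (c k))^2
      = n * (∑ g, q g * (f g)^2) + ((n:ℝ)^2 - n) * (∑ g, q g * f g)^2 := by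
  have expand : ∀ c : Fin n → Γ, (∏ k, q (c k)) * (∑ k, f (c k))^2
      = ∑ k : Fin n, ∑ l : Fin n, (∏ j, q (c j)) * (f (c k) * f (c l)) := by
    intro c
    rw [sq, Finset.sum_mul_sum, Finset.mul_sum]
    congr 1; ext k
    rw [Finset.mul_sum]
  simp_rw [expand]
  rw [Finset.sum_comm]
  have hkl : ∀ k : Fin n, ∑ c : Fin n → Γ, ∑ l : Fin n, (∏ j, q (c j)) * (f (c k) * f (c l))
      = ∑ l : Fin n, if k = l then (∑ g, q g * (f g)^2) else (∑ g, q g * f g)^2 := by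
    intro k
    rw [Finset.sum_comm]
    congr 1; ext l
    by_cases h : k = l
    · subst h
      simp only [if_pos rfl]
      have := pi_sum_single q hq k (fun g => f g * f g)
      simpa [sq] using this
    · rw [if_neg h, sq, pi_sum_pair q hq h f f]
  simp_rw [hkl]
  have inner : ∀ k : Fin n, (∑ l : Fin n, if k = l then (∑ g, q g * (f g)^2) else (∑ g, q g * f g)^2)
      = (∑ g, q g * (f g)^2) + ((n:ℝ) - 1) * (∑ g, q g * f g)^2 := by
    intro k
    have : ∀ l : Fin n, (if k = l then (∑ g, q g * (f g)^2) else (∑ g, q g * f g)^2)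
        = (∑ g, q g * f g)^2 + (if k = l then (∑ g, q g * (f g)^2) - (∑ g, q g * f g)^2 else 0) := by
      intro l; by_cases h : k = l <;> simp [h]
    simp_rw [this]
    rw [Finset.sum_add_distrib, Finset.sum_const, Finset.sum_ite_eq]
    simp [Finset.card_univ]
    ring
  simp_rw [inner]
  rw [Finset.sum_const]
  simp [Finset.card_univ]
  ring

lemma pi_sum_var (q : Γ → ℝ) (hq : ∑ g, q g = 1) (f : Γ → ℝ) (n : ℕ)
    (hqp : ∑ c : Fin n → Γ, ∏ k, q (c k) = 1) :
    ∑ c : Fin n → Γ, (∏ k, q (c k)) * ((∑ k, f (c k)) - n * (∑ g, q g * f g))^2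
      = n * ((∑ g, q g * (f g)^2) - (∑ g, q g * f g)^2) := by
  have expand : ∀ c : Fin n → Γ, (∏ k, q (c k)) * ((∑ k, f (c k)) - n * (∑ g, q g * f g))^2
      = (∏ k, q (c k)) * (∑ k, f (c k))^2
        - (2 * ((n:ℝ) * (∑ g, q g * f g))) * ((∏ k, q (c k)) * (∑ k, f (c k)))
        + ((n:ℝ) * (∑ g, q g * f g))^2 * (∏ k, q (c k)) := by
    intro c; ring
  simp_rw [expand]
  rw [Finset.sum_add_distrib, Finset.sum_sub_distrib, ← Finset.mul_sum, ← Finset.mul_sum,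
    pi_sum_sq q hq f n, pi_sum_S q hq f n, hqp]
  ring

lemma reduction (q f : Γ → ℝ) (g : Γ) (n : ℕ) :
    ∑ c : Fin (n+1) → Γ, (∏ k, q (c k)) *
        ((∑ k : Fin (n+1), if c k = g then f g else 0) / ∑ k : Fin (n+1), f (c k))
    = ((n:ℝ)+1) * (q g * f g * ∑ c : Fin n → Γ, (∏ k, q (c k)) / (f g + ∑ k, f (c k))) := by
  have step1 : ∀ c : Fin (n+1) → Γ, (∏ k, q (c k)) *
        ((∑ k : Fin (n+1), if c k = g then f g else 0) / ∑ k : Fin (n+1), f (c k))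
      = ∑ k : Fin (n+1), (∏ j, q (c j)) * ((if c k = g then f g else 0) / ∑ j : Fin (n+1), f (c j)) := by
    intro c
    rw [Finset.sum_div, Finset.mul_sum]
  simp_rw [step1]
  rw [Finset.sum_comm]
  have step2 : ∀ k : Fin (n+1),
      (∑ c : Fin (n+1) → Γ, (∏ j, q (c j)) * ((if c k = g then f g else 0) / ∑ j : Fin (n+1), f (c j)))
      = q g * f g * ∑ c : Fin n → Γ, (∏ j, q (c j)) / (f g + ∑ j, f (c j)) := by
    intro k
    rw [← Equiv.sum_comp (Fin.insertNthEquiv (fun _ => Γ) k)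
        (fun c => (∏ j, q (c j)) * ((if c k = g then f g else 0) / ∑ j : Fin (n+1), f (c j)))]
    rw [Fintype.sum_prod_type]
    have inner : ∀ (x : Γ),
        (∑ d : Fin n → Γ, (∏ j, q ((Fin.insertNthEquiv (fun _ => Γ) k (x, d)) j)) *
          ((if (Fin.insertNthEquiv (fun _ => Γ) k (x, d)) k = g then f g else 0) /
            ∑ j : Fin (n+1), f ((Fin.insertNthEquiv (fun _ => Γ) k (x, d)) j)))
        = if x = g then q g * f g * ∑ d : Fin n → Γ, (∏ j, q (d j)) / (f g + ∑ j, f (d j)) else 0 := by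
      intro x
      simp only [Fin.insertNthEquiv, Equiv.coe_fn_mk]
      by_cases hx : x = g
      · subst hx
        rw [if_pos rfl, Finset.mul_sum]
        congr 1; ext d
        have hprod : (∏ j : Fin (n+1), q (k.insertNth (α := fun _ => Γ) x d j))
            = q x * ∏ j, q (d j) := by
          rw [Fin.prod_univ_succAbove (fun j => q (k.insertNth (α := fun _ => Γ) x d j)) k]
          simp
        have hsum : (∑ j : Fin (n+1), f (k.insertNth (α := fun _ => Γ) x d j))
            = f x + ∑ j, f (d j) := by
          rw [Fin.sum_univ_succAbove (fun j => f (k.insertNth (α := fun _ => Γ) x d j)) k]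
          simp
        rw [hprod, hsum]
        simp only [Fin.insertNth_apply_same, if_true]
        ring
      · simp only [Fin.insertNth_apply_same, if_neg hx]
        simp
    simp_rw [inner]
    rw [Finset.sum_ite_eq' Finset.univ g]
    simp
  simp_rw [step2]
  rw [Finset.sum_const]
  simp [Finset.card_univ]
end Aux

open Filter

/-- Tournament between children only: with `K` children drawn i.i.d. from `q`
and the winner chosen with probability proportional to fitness, the
distribution of the winner converges, as `K → ∞`, to the distribution
proportional to `q(·) f(·)`. -/
theorem children_tournament_tendsto_gibbs
    {Γ : Type*} [Fintype Γ] [DecidableEq Γ]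
    (q : Γ → ℝ) (hqpos : ∀ g, 0 < q g) (hqsum : ∑ g, q g = 1)
    (f : Γ → ℝ) (hfpos : ∀ g, 0 < f g)
    -- probability that the accepted child among K children equals g
    (W : ℕ → Γ → ℝ)
    (hW : ∀ (K : ℕ) (g : Γ), W K g =
      ∑ c : Fin K → Γ, (∏ k, q (c k)) *
        ((∑ k : Fin K, if c k = g then f g else 0) / ∑ k : Fin K, f (c k))) :
    ∀ g : Γ, Tendsto (fun K => W K g) atTop
      (nhds (q g * f g / ∑ g' : Γ, q g' * f g')) := by
  intro g
  have hne : (Finset.univ : Finset Γ).Nonempty := ⟨g, Finset.mem_univ g⟩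
  set μ := ∑ g' : Γ, q g' * f g' with hμdef
  have hμpos : 0 < μ :=
    Finset.sum_pos (fun i _ => mul_pos (hqpos i) (hfpos i)) hne
  set Ef2 := ∑ g' : Γ, q g' * (f g')^2 with hEf2def
  set fmin := Finset.univ.inf' hne f with hfmindef
  have hfmin_le : ∀ x : Γ, fmin ≤ f x := fun x => Finset.inf'_le f (Finset.mem_univ x)
  have hfminpos : 0 < fmin := by
    rw [hfmindef, Finset.lt_inf'_iff]
    exact fun b _ => hfpos b
  -- notation
  set T : ℕ → ℝ := fun n => ∑ c : Fin n → Γ, (∏ k, q (c k)) / (f g + ∑ k, f (c k)) with hTdef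
  set R : ℕ → ℝ := fun n => ∑ c : Fin n → Γ,
      (∏ k, q (c k)) * ((∑ k, f (c k)) - n * μ)^2
        / (((n:ℝ) * μ + f g)^2 * (f g + ∑ k, f (c k))) with hRdef
  have hb : ∀ n : ℕ, 0 < (n:ℝ) * μ + f g := by
    intro n
    have := mul_nonneg (Nat.cast_nonneg n) hμpos.le
    linarith [hfpos g]
  have hm : ∀ n : ℕ, 0 < (n:ℝ) * fmin + f g := by
    intro n
    have := mul_nonneg (Nat.cast_nonneg n) hfminpos.le
    linarith [hfpos g]
  have hX : ∀ (n : ℕ) (c : Fin n → Γ), (n:ℝ) * fmin + f g ≤ f g + ∑ k, f (c k) := by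
    intro n c
    have h1 : (n:ℝ) * fmin = ∑ _k : Fin n, fmin := by
      simp [Finset.sum_const, Finset.card_univ, mul_comm]
    have h2 : ∑ _k : Fin n, fmin ≤ ∑ k, f (c k) :=
      Finset.sum_le_sum (fun k _ => hfmin_le (c k))
    linarith [h1 ▸ h2]
  have hXpos : ∀ (n : ℕ) (c : Fin n → Γ), 0 < f g + ∑ k, f (c k) := by
    intro n c
    exact lt_of_lt_of_le (hm n) (hX n c)
  have hPnn : ∀ (n : ℕ) (c : Fin n → Γ), 0 ≤ ∏ k, q (c k) :=
    fun n c => Finset.prod_nonneg (fun k _ => (hqpos (c k)).le)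
  -- reduction of W
  have hWn : ∀ n : ℕ, W (n+1) g = ((n:ℝ)+1) * (q g * f g * T n) := by
    intro n
    rw [hW]
    exact reduction q f g n
  -- T = 1/b + R
  have hTR : ∀ n : ℕ, T n = 1 / ((n:ℝ) * μ + f g) + R n := by
    intro n
    have hpt : ∀ c : Fin n → Γ, (∏ k, q (c k)) / (f g + ∑ k, f (c k))
        = (∏ k, q (c k)) * (1 / ((n:ℝ) * μ + f g))
          + ((∏ k, q (c k)) * ((∑ k, f (c k)) - n * μ)) * (-(1 / ((n:ℝ) * μ + f g)^2))
          + (∏ k, q (c k)) * ((∑ k, f (c k)) - n * μ)^2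
              / (((n:ℝ) * μ + f g)^2 * (f g + ∑ k, f (c k))) := by
      intro c
      have h1 : ((n:ℝ) * μ + f g) ≠ 0 := (hb n).ne'
      have h2 : f g + ∑ k, f (c k) ≠ 0 := (hXpos n c).ne'
      field_simp
      ring
    rw [hTdef]
    simp only [hpt]
    rw [Finset.sum_add_distrib, Finset.sum_add_distrib, ← Finset.sum_mul, ← Finset.sum_mul]
    have hsum0 : ∑ c : Fin n → Γ, (∏ k, q (c k)) * ((∑ k, f (c k)) - n * μ) = 0 := by
      have expand : ∀ c : Fin n → Γ, (∏ k, q (c k)) * ((∑ k, f (c k)) - n * μ)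
          = (∏ k, q (c k)) * (∑ k, f (c k)) - ((n:ℝ) * μ) * (∏ k, q (c k)) := by
        intro c; ring
      simp_rw [expand]
      rw [Finset.sum_sub_distrib, ← Finset.mul_sum, pi_sum_S q hqsum f n, pi_sum_prod q hqsum n]
      ring
    rw [hsum0, pi_sum_prod q hqsum n, hRdef]
    ring
  -- bounds on R
  have hR0 : ∀ n : ℕ, 0 ≤ R n := by
    intro n
    apply Finset.sum_nonneg
    intro c _
    apply div_nonneg
    · exact mul_nonneg (hPnn n c) (sq_nonneg _)
    · exact (mul_pos (pow_pos (hb n) 2) (hXpos n c)).le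
  have hRle : ∀ n : ℕ, R n ≤ ((n:ℝ) * (Ef2 - μ^2))
      / (((n:ℝ) * μ + f g)^2 * ((n:ℝ) * fmin + f g)) := by
    intro n
    have hterm : ∀ c : Fin n → Γ,
        (∏ k, q (c k)) * ((∑ k, f (c k)) - n * μ)^2
            / (((n:ℝ) * μ + f g)^2 * (f g + ∑ k, f (c k)))
        ≤ (∏ k, q (c k)) * ((∑ k, f (c k)) - n * μ)^2
            / (((n:ℝ) * μ + f g)^2 * ((n:ℝ) * fmin + f g)) := by
      intro c
      apply div_le_div_of_nonneg_left
      · exact mul_nonneg (hPnn n c) (sq_nonneg _)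
      · exact mul_pos (pow_pos (hb n) 2) (hm n)
      · exact mul_le_mul_of_nonneg_left (hX n c) (pow_pos (hb n) 2).le
    calc R n ≤ ∑ c : Fin n → Γ, (∏ k, q (c k)) * ((∑ k, f (c k)) - n * μ)^2
            / (((n:ℝ) * μ + f g)^2 * ((n:ℝ) * fmin + f g)) :=
          Finset.sum_le_sum (fun c _ => hterm c)
      _ = ((n:ℝ) * (Ef2 - μ^2)) / (((n:ℝ) * μ + f g)^2 * ((n:ℝ) * fmin + f g)) := by
          rw [← Finset.sum_div, pi_sum_var q hqsum f n (pi_sum_prod q hqsum n)]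
  -- limits
  have h0 : Tendsto (fun n : ℕ => 1 / (n:ℝ)) atTop (nhds 0) :=
    tendsto_one_div_atTop_nhds_zero_nat
  have h1 : Tendsto (fun n : ℕ => ((n:ℝ)+1) / ((n:ℝ) * μ + f g)) atTop (nhds (1/μ)) := by
    have key : Tendsto (fun n : ℕ => (1 + 1/(n:ℝ)) / (μ + f g * (1/(n:ℝ)))) atTop
        (nhds (1/μ)) := by
      have hlim : nhds (1/μ) = nhds ((1 + 0) / (μ + f g * 0)) := by norm_num
      rw [hlim]
      exact Tendsto.div (tendsto_const_nhds.add h0)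
        (tendsto_const_nhds.add (tendsto_const_nhds.mul h0)) (by simpa using hμpos.ne')
    apply key.congr'
    filter_upwards [eventually_ge_atTop 1] with n hn
    have hn' : (0:ℝ) < n := by exact_mod_cast Nat.pos_of_ne_zero (by omega)
    have hd : (0:ℝ) < μ + f g * (1/(n:ℝ)) :=
      add_pos hμpos (mul_pos (hfpos g) (by positivity))
    rw [div_eq_div_iff hd.ne' (hb n).ne']
    field_simp
    try ring
    try tauto
  have h2 : Tendsto (fun n : ℕ => (((n:ℝ)+1) * (n:ℝ))
      / (((n:ℝ) * μ + f g)^2 * ((n:ℝ) * fmin + f g))) atTop (nhds 0) := by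
    have key : Tendsto (fun n : ℕ => ((1 + 1/(n:ℝ)) * (1/(n:ℝ)))
        / ((μ + f g * (1/(n:ℝ)))^2 * (fmin + f g * (1/(n:ℝ))))) atTop (nhds 0) := by
      have hlim : nhds (0:ℝ) = nhds (((1 + 0) * 0) / ((μ + f g * 0)^2 * (fmin + f g * 0))) := by
        norm_num
      rw [hlim]
      apply Tendsto.div
      · exact (tendsto_const_nhds.add h0).mul h0
      · exact ((tendsto_const_nhds.add (tendsto_const_nhds.mul h0)).pow 2).mul
          (tendsto_const_nhds.add (tendsto_const_nhds.mul h0))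
      · have heq2 : (μ + f g * 0)^2 * (fmin + f g * 0) = μ^2 * fmin := by ring
        rw [heq2]
        exact (mul_pos (pow_pos hμpos 2) hfminpos).ne'
    apply key.congr'
    filter_upwards [eventually_ge_atTop 1] with n hn
    have hn' : (0:ℝ) < n := by exact_mod_cast Nat.pos_of_ne_zero (by omega)
    have hd : (0:ℝ) < (μ + f g * (1/(n:ℝ)))^2 * (fmin + f g * (1/(n:ℝ))) := by
      have e1 : (0:ℝ) < μ + f g * (1/(n:ℝ)) := add_pos hμpos (mul_pos (hfpos g) (by positivity))
      have e2 : (0:ℝ) < fmin + f g * (1/(n:ℝ)) := add_pos hfminpos (mul_pos (hfpos g) (by positivity))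
      exact mul_pos (pow_pos e1 2) e2
    rw [div_eq_div_iff hd.ne' (mul_pos (pow_pos (hb n) 2) (hm n)).ne']
    field_simp
    try ring
    try tauto
  -- second part tends to zero
  have hpart2 : Tendsto (fun n : ℕ => ((n:ℝ)+1) * (q g * f g * R n)) atTop (nhds 0) := by
    have hub : ∀ n : ℕ, ((n:ℝ)+1) * (q g * f g * R n)
        ≤ (q g * f g * (Ef2 - μ^2)) * ((((n:ℝ)+1) * (n:ℝ))
            / (((n:ℝ) * μ + f g)^2 * ((n:ℝ) * fmin + f g))) := by
      intro n
      have hc : 0 ≤ ((n:ℝ)+1) * (q g * f g) :=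
        mul_nonneg (by positivity) (mul_nonneg (hqpos g).le (hfpos g).le)
      calc ((n:ℝ)+1) * (q g * f g * R n)
          = (((n:ℝ)+1) * (q g * f g)) * R n := by ring
        _ ≤ (((n:ℝ)+1) * (q g * f g)) * (((n:ℝ) * (Ef2 - μ^2))
              / (((n:ℝ) * μ + f g)^2 * ((n:ℝ) * fmin + f g))) :=
            mul_le_mul_of_nonneg_left (hRle n) hc
        _ = (q g * f g * (Ef2 - μ^2)) * ((((n:ℝ)+1) * (n:ℝ))
              / (((n:ℝ) * μ + f g)^2 * ((n:ℝ) * fmin + f g))) := by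
            ring
    have hlb : ∀ n : ℕ, 0 ≤ ((n:ℝ)+1) * (q g * f g * R n) := by
      intro n
      exact mul_nonneg (by positivity)
        (mul_nonneg (mul_nonneg (hqpos g).le (hfpos g).le) (hR0 n))
    have hbound : Tendsto (fun n : ℕ => (q g * f g * (Ef2 - μ^2)) * ((((n:ℝ)+1) * (n:ℝ))
        / (((n:ℝ) * μ + f g)^2 * ((n:ℝ) * fmin + f g)))) atTop (nhds 0) := by
      have := h2.const_mul (q g * f g * (Ef2 - μ^2))
      simpa using this
    exact squeeze_zero hlb hub hbound
  -- assemble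
  rw [← Filter.tendsto_add_atTop_iff_nat 1]
  have heq : (fun n : ℕ => W (n+1) g)
      = fun n : ℕ => q g * f g * (((n:ℝ)+1) / ((n:ℝ) * μ + f g))
          + ((n:ℝ)+1) * (q g * f g * R n) := by
    funext n
    rw [hWn n, hTR n]
    -- (cast already normalized)
    ring
  rw [heq]
  have htarget : q g * f g / μ = q g * f g * (1/μ) + 0 := by ring
  rw [htarget]
  exact (h1.const_mul (q g * f g)).add hpart2
end

section
/- The Kolmogorov cycle criterion: a finite irreducible Markov chain with positive transition probabilities satisfying P(x_1,x_2)P(x_2,x_3)⋯P(x_{n-1},x_n)P(x_n,x_1) = P(x_1,x_n)P(x_n,x_{n-1})⋯P(x_2,x_1) for every finite cycle x_1,…,x_n is reversible, i.e., admits a distribution π with π(x)P(x,y) = π(y)P(y,x) for all x,y. -/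
/-- Kolmogorov's cycle criterion: a finite Markov chain with strictly positive
transition probabilities whose transition products agree around every cycle in
both directions is reversible, i.e. admits a probability distribution `π`
satisfying detailed balance. -/
theorem kolmogorov_cycle_criterion
    {S : Type*} [Fintype S] [Nonempty S]
    (P : S → S → ℝ)
    (hPpos : ∀ x y, 0 < P x y)
    (hProw : ∀ x, ∑ y, P x y = 1)
    (hcycle : ∀ (n : ℕ) (x : Fin (n + 1) → S),
      (∏ i : Fin n, P (x i.castSucc) (x i.succ)) * P (x (Fin.last n)) (x 0) =
      (∏ i : Fin n, P (x i.succ) (x i.castSucc)) * P (x 0) (x (Fin.last n))) :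
    ∃ π : S → ℝ, (∀ x, 0 ≤ π x) ∧ (∑ x, π x = 1) ∧
      (∀ x y, π x * P x y = π y * P y x) := by
  obtain ⟨o⟩ := ‹Nonempty S›
  set μ : S → ℝ := fun x => P o x / P x o with hμ
  have hμpos : ∀ x, 0 < μ x := fun x => div_pos (hPpos o x) (hPpos x o)
  have hdb : ∀ x y, μ x * P x y = μ y * P y x := by
    intro x y
    have h := hcycle 2 ![o, x, y]
    simp [Fin.prod_univ_two, Fin.last] at h
    -- h : P o x * P x y * P y o = P x o * P y x * P o y
    have hxo := (hPpos x o).ne'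
    have hyo := (hPpos y o).ne'
    simp only [hμ]
    field_simp
    nlinarith [h, hPpos o x, hPpos o y, hPpos x y, hPpos y x]
  have hsum : 0 < ∑ x, μ x :=
    Finset.sum_pos (fun x _ => hμpos x) Finset.univ_nonempty
  refine ⟨fun x => μ x / ∑ z, μ z, fun x => le_of_lt (div_pos (hμpos x) hsum), ?_, ?_⟩
  · rw [← Finset.sum_div, div_self hsum.ne']
  · intro x y
    have := hdb x y
    field_simp
    linarith [this]
end
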